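/- arXiv:1410.7976 — 3 statements merged into one kernel-verified Lean document; each statement's English description precedes it below -/
import Mathlib

section
/- For every m ∈ ℕ and every j with 1 ≤ j ≤ 2^m − 1, the Walsh-Dirichlet kernels satisfy D_{2^m − j}(x) = D_{2^m}(x) − w_{2^m−1}(x) · D_j(x) for all x ∈ G. -/
/-!
The Walsh functions are characters of the dyadic group indexed by `(ℕ, xor)`:
`w_{a ⊕ b} = w_a w_b`. For `i < 2^m` the reflection `2^m - 1 - i` is `(2^m - 1) ⊕ i`, so the
last `j` terms of `D_{2^m}`, read backwards, are `w_{2^m-1} w_0, …, w_{2^m-1} w_{j-1}`.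
-/

open Finset

/-- The dyadic (Walsh) group `G = ∏_{k ∈ ℕ} ℤ₂` with coordinatewise mod-2 addition. -/
abbrev G : Type := ℕ → ZMod 2

/-- The Walsh function `w_n(x) = ∏_k r_k(x)^{n_k} = (-1)^{Σ_k n_k x_k}`,
where `n = Σ_k n_k 2^k` in binary and `r_k(x) = (-1)^{x_k}`. -/
noncomputable def walsh (n : ℕ) (x : G) : ℝ :=
  (-1 : ℝ) ^ (∑ k ∈ Finset.range n.size, (n.testBit k).toNat * (x k).val)

/-- The Walsh–Dirichlet kernel `D_n = Σ_{i=0}^{n-1} w_i` (so `D_0 = 0`). -/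
noncomputable def dirichlet (n : ℕ) (x : G) : ℝ :=
  ∑ i ∈ Finset.range n, walsh i x

lemma walsh_eq_prod_of_lt_two_pow {n M : ℕ} (h : n < 2 ^ M) (x : G) :
    walsh n x = ∏ k ∈ range M, (-1 : ℝ) ^ ((n.testBit k).toNat * (x k).val) := by
  rw [walsh, prod_pow_eq_pow_sum]
  congr 1
  refine sum_subset (fun k hk => ?_) (fun k _ hk => ?_)
  · exact mem_range.2 ((mem_range.1 hk).trans_le (Nat.size_le.2 h))
  · rw [mem_range, not_lt, Nat.size_le] at hk
    simp [Nat.testBit_eq_false_of_lt hk]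

lemma walsh_xor (a b : ℕ) (x : G) : walsh (a ^^^ b) x = walsh a x * walsh b x := by
  have ha : a < 2 ^ max a b := (le_max_left a b).trans_lt Nat.lt_two_pow_self
  have hb : b < 2 ^ max a b := (le_max_right a b).trans_lt Nat.lt_two_pow_self
  rw [walsh_eq_prod_of_lt_two_pow (Nat.xor_lt_two_pow ha hb), walsh_eq_prod_of_lt_two_pow ha,
    walsh_eq_prod_of_lt_two_pow hb, ← prod_mul_distrib]
  refine prod_congr rfl fun k _ => ?_
  rw [Nat.testBit_xor]
  cases a.testBit k <;> cases b.testBit k <;> simp [← pow_add, ← two_mul, pow_mul]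

lemma two_pow_sub_one_sub_eq_xor {m i : ℕ} (hi : i < 2 ^ m) :
    2 ^ m - 1 - i = (2 ^ m - 1) ^^^ i := by
  refine Nat.eq_of_testBit_eq fun k => ?_
  rw [Nat.sub_sub, add_comm, Nat.testBit_two_pow_sub_succ hi, Nat.testBit_xor,
    Nat.testBit_two_pow_sub_one]
  cases hik : i.testBit k
  · simp
  · have hk : k < m :=
      (Nat.pow_lt_pow_iff_right one_lt_two).1 ((Nat.ge_two_pow_of_testBit hik).trans_lt hi)
    simp [hk]

lemma walsh_two_pow_sub_one_sub {m i : ℕ} (hi : i < 2 ^ m) (x : G) :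
    walsh (2 ^ m - 1 - i) x = walsh (2 ^ m - 1) x * walsh i x := by
  rw [two_pow_sub_one_sub_eq_xor hi, walsh_xor]

lemma sum_Ico_two_pow_sub_walsh {m j : ℕ} (hj : j ≤ 2 ^ m) (x : G) :
    ∑ i ∈ Ico (2 ^ m - j) (2 ^ m), walsh i x = walsh (2 ^ m - 1) x * dirichlet j x := by
  rw [dirichlet, mul_sum, sum_Ico_eq_sum_range, Nat.sub_sub_self hj, ← sum_range_reflect]
  refine sum_congr rfl fun i hi => ?_
  rw [mem_range] at hi
  rw [← walsh_two_pow_sub_one_sub (by omega)]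
  congr 1
  omega

theorem dirichlet_two_pow_sub_general (m j : ℕ) (hj2 : j ≤ 2 ^ m - 1) (x : G) :
    dirichlet (2 ^ m - j) x = dirichlet (2 ^ m) x - walsh (2 ^ m - 1) x * dirichlet j x := by
  rw [eq_sub_iff_add_eq, ← sum_Ico_two_pow_sub_walsh (hj2.trans (Nat.sub_le _ _)),
    dirichlet, dirichlet, sum_range_add_sum_Ico _ (Nat.sub_le _ _)]

/-- For `1 ≤ j ≤ 2^m − 1`, `D_{2^m − j} = D_{2^m} − w_{2^m−1} · D_j`. -/
theorem dirichlet_two_pow_sub (m j : ℕ) (hj1 : 1 ≤ j) (hj2 : j ≤ 2 ^ m - 1) (x : G) :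
    dirichlet (2 ^ m - j) x = dirichlet (2 ^ m) x - walsh (2 ^ m - 1) x * dirichlet j x :=
  dirichlet_two_pow_sub_general m j hj2 x
end

section
/- Let (q_k)_{k≥0} be a non-increasing sequence of nonnegative reals with q_0 > 0 and Q_n := Σ_{k=0}^{n-1} q_k, and assume there is a constant C with q_0·n ≤ C·Q_n for all n ≥ 1. Then for all n ≥ 1 and all elements S_1,…,S_n of a normed space, the Nörlund mean t_n = Q_n^{-1} Σ_{k=1}^n q_{n-k} S_k satisfies ‖t_n‖ ≤ (1/Q_n)( Σ_{j=1}^{n-1} |q_{n-j} − q_{n-j-1}|·j + q_0·n ) · sup_{1≤j≤n} ‖σ_j‖ ≤ (2C+1) · sup_{1≤j≤n} ‖σ_j‖, where σ_j = j^{-1} Σ_{k=1}^j S_k. -/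
open Finset


lemma abel_aux {V : Type*} [NormedAddCommGroup V] [NormedSpace ℝ V] (a : ℕ → ℝ) (S : ℕ → V) :
    ∀ n, 1 ≤ n → ∑ k ∈ Icc 1 n, a k • S k
      = ∑ j ∈ Icc 1 (n-1), (a j - a (j+1)) • (∑ k ∈ Icc 1 j, S k)
        + a n • ∑ k ∈ Icc 1 n, S k := by
  intro n hn
  induction n, hn using Nat.le_induction with
  | base => simp
  | succ m hm ih =>
      rw [Finset.sum_Icc_succ_top (by omega : 1 ≤ m + 1), ih]
      have h1 : m + 1 - 1 = (m - 1) + 1 := by omega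
      rw [h1, Finset.sum_Icc_succ_top (by omega : 1 ≤ (m-1)+1)]
      have h2 : m - 1 + 1 = m := by omega
      rw [h2, Finset.sum_Icc_succ_top (by omega : 1 ≤ m + 1)]
      simp only [sub_smul, smul_add]
      abel

lemma tel_aux (f : ℕ → ℝ) : ∀ m, ∑ j ∈ Icc 1 m, (f (j+1) - f j) = f (m+1) - f 1 := by
  intro m
  induction m with
  | zero => simp
  | succ k ih => rw [Finset.sum_Icc_succ_top (by omega), ih]; ring

/-- For a non-increasing nonnegative sequence `q` with `q 0 > 0` and `q_0·n = O(Q_n)`,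
the Nörlund mean satisfies
`‖t_n‖ ≤ Q_n^{-1}(Σ_{j=1}^{n-1} |q_{n-j} − q_{n-j-1}|·j + q_0·n) · sup_{1≤j≤n} ‖σ_j‖`
and this bound is at most `(2C+1) · sup_{1≤j≤n} ‖σ_j‖`. -/
theorem norlund_bound_of_antitone (V : Type*) [NormedAddCommGroup V] [NormedSpace ℝ V]
    (q : ℕ → ℝ) (hnn : ∀ k, 0 ≤ q k) (hq0 : 0 < q 0) (hanti : Antitone q)
    (C : ℝ) (hC : ∀ n : ℕ, 1 ≤ n → q 0 * n ≤ C * ∑ k ∈ Finset.range n, q k)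
    (S : ℕ → V) (n : ℕ) (hn : 1 ≤ n) :
    ‖(∑ k ∈ Finset.range n, q k)⁻¹ • ∑ k ∈ Finset.Icc 1 n, q (n - k) • S k‖ ≤
        (∑ k ∈ Finset.range n, q k)⁻¹ *
          (∑ j ∈ Finset.Icc 1 (n - 1), |q (n - j) - q (n - j - 1)| * j + q 0 * n) *
          (Finset.Icc 1 n).sup' (Finset.nonempty_Icc.mpr hn)
            (fun j => ‖(j : ℝ)⁻¹ • ∑ k ∈ Finset.Icc 1 j, S k‖) ∧
      (∑ k ∈ Finset.range n, q k)⁻¹ *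
          (∑ j ∈ Finset.Icc 1 (n - 1), |q (n - j) - q (n - j - 1)| * j + q 0 * n) *
          (Finset.Icc 1 n).sup' (Finset.nonempty_Icc.mpr hn)
            (fun j => ‖(j : ℝ)⁻¹ • ∑ k ∈ Finset.Icc 1 j, S k‖) ≤
        (2 * C + 1) *
          (Finset.Icc 1 n).sup' (Finset.nonempty_Icc.mpr hn)
            (fun j => ‖(j : ℝ)⁻¹ • ∑ k ∈ Finset.Icc 1 j, S k‖) := by
  set Q := ∑ k ∈ Finset.range n, q k with hQdef
  set M := (Finset.Icc 1 n).sup' (Finset.nonempty_Icc.mpr hn)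
      (fun j => ‖(j : ℝ)⁻¹ • ∑ k ∈ Finset.Icc 1 j, S k‖) with hMdef
  set B := ∑ j ∈ Finset.Icc 1 (n - 1), |q (n - j) - q (n - j - 1)| * j + q 0 * n with hBdef
  have hQpos : 0 < Q := by
    refine Finset.sum_pos' (fun k _ => hnn k) ⟨0, Finset.mem_range.mpr hn, hq0⟩
  have hMnn : 0 ≤ M :=
    le_trans (norm_nonneg _)
      (Finset.le_sup' (fun (j : ℕ) => ‖(j : ℝ)⁻¹ • ∑ k ∈ Finset.Icc 1 j, S k‖)
        (Finset.mem_Icc.mpr ⟨hn, le_refl n⟩))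
  have hT : ∀ j ∈ Icc 1 n, ‖∑ k ∈ Icc 1 j, S k‖ ≤ (j : ℝ) * M := by
    intro j hj
    obtain ⟨hj1, hjn⟩ := Finset.mem_Icc.mp hj
    have hjpos : (0 : ℝ) < j := by exact_mod_cast hj1
    have hle := Finset.le_sup' (fun (j : ℕ) => ‖(j : ℝ)⁻¹ • ∑ k ∈ Finset.Icc 1 j, S k‖) hj
    rw [norm_smul, norm_inv, Real.norm_natCast, ← hMdef] at hle
    rwa [inv_mul_le_iff₀ hjpos] at hle
  -- Abel summation
  have habel := abel_aux (fun k => q (n - k)) S n hn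
  simp only [Nat.sub_self] at habel
  have hnorm : ‖∑ k ∈ Finset.Icc 1 n, q (n - k) • S k‖ ≤ B * M := by
    rw [habel]
    refine le_trans (norm_add_le _ _) ?_
    have h1 : ‖∑ j ∈ Icc 1 (n-1), (q (n - j) - q (n - (j+1))) • (∑ k ∈ Icc 1 j, S k)‖
        ≤ ∑ j ∈ Icc 1 (n-1), |q (n - j) - q (n - j - 1)| * j * M := by
      refine le_trans (norm_sum_le _ _) (Finset.sum_le_sum ?_)
      intro j hj
      obtain ⟨h1', h2'⟩ := Finset.mem_Icc.mp hj
      have hj' : j ∈ Icc 1 n := Finset.mem_Icc.mpr ⟨h1', by omega⟩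
      rw [norm_smul, Real.norm_eq_abs, mul_assoc]
      have : n - (j+1) = n - j - 1 := by omega
      rw [this]
      exact mul_le_mul_of_nonneg_left (hT j hj') (abs_nonneg _)
    have h2 : ‖q 0 • ∑ k ∈ Icc 1 n, S k‖ ≤ q 0 * n * M := by
      rw [norm_smul, Real.norm_eq_abs, abs_of_nonneg (hnn 0), mul_assoc]
      exact mul_le_mul_of_nonneg_left (hT n (Finset.mem_Icc.mpr ⟨hn, le_refl n⟩)) (hnn 0)
    calc _ ≤ (∑ j ∈ Icc 1 (n-1), |q (n - j) - q (n - j - 1)| * j * M) + q 0 * n * M :=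
            add_le_add h1 h2
      _ = B * M := by
            simp only [← Finset.sum_mul, ← add_mul, hBdef]
  have hB2 : B ≤ 2 * (C * Q) := by
    have hsum : ∑ j ∈ Finset.Icc 1 (n - 1), |q (n - j) - q (n - j - 1)| * j ≤ q 0 * n := by
      have hstep : ∀ j ∈ Icc 1 (n-1), |q (n - j) - q (n - j - 1)| * j
          ≤ (q (n - (j+1)) - q (n - j)) * n := by
        intro j hj
        obtain ⟨h1', h2'⟩ := Finset.mem_Icc.mp hj
        have hd : q (n - j) ≤ q (n - j - 1) := hanti (by omega)
        have hjn : (j : ℝ) ≤ n := by exact_mod_cast (by omega : j ≤ n)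
        have heq : n - (j+1) = n - j - 1 := by omega
        rw [abs_sub_comm, abs_of_nonneg (by linarith), heq]
        exact mul_le_mul_of_nonneg_left hjn (by linarith)
      refine le_trans (Finset.sum_le_sum hstep) ?_
      rw [← Finset.sum_mul, tel_aux (fun j => q (n - j)) (n-1)]
      have h3 : n - 1 + 1 = n := by omega
      rw [h3, Nat.sub_self]
      have : 0 ≤ q (n - 1) := hnn _
      have hn' : (0 : ℝ) ≤ n := by positivity
      nlinarith
    have hcq := hC n hn
    rw [← hQdef] at hcq
    simp only [hBdef]
    linarith
  have hcoef : Q⁻¹ * B ≤ 2 * C + 1 := by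
    have h4 : Q⁻¹ * B ≤ Q⁻¹ * (2 * (C * Q)) :=
      mul_le_mul_of_nonneg_left hB2 (inv_nonneg.mpr hQpos.le)
    have h5 : Q⁻¹ * (2 * (C * Q)) = 2 * C := by
      field_simp
    have h6 : 0 ≤ Q⁻¹ * B := by
      apply mul_nonneg (inv_nonneg.mpr hQpos.le)
      have : (0:ℝ) ≤ ∑ j ∈ Finset.Icc 1 (n - 1), |q (n - j) - q (n - j - 1)| * j :=
        Finset.sum_nonneg fun j _ => mul_nonneg (abs_nonneg _) (by positivity)
      have : (0:ℝ) ≤ q 0 * n := by positivity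
      simp only [hBdef]; linarith [Finset.sum_nonneg
        (fun j (_ : j ∈ Finset.Icc 1 (n-1)) => mul_nonneg (abs_nonneg (q (n - j) - q (n - j - 1))) (by positivity : (0:ℝ) ≤ (j:ℝ)))]
    linarith
  constructor
  · rw [norm_smul, norm_inv, Real.norm_eq_abs, abs_of_pos hQpos, mul_assoc]
    exact mul_le_mul_of_nonneg_left hnorm (inv_nonneg.mpr hQpos.le)
  · exact mul_le_mul_of_nonneg_right hcoef hMnn
end

section
/- Let (q_k)_{k≥0} be a non-decreasing sequence of nonnegative reals with q_0 > 0 and Q_n := Σ_{k=0}^{n-1} q_k. Then for all n ≥ 1 and elements S_1,…,S_n of a normed space, the Nörlund mean t_n = Q_n^{-1} Σ_{k=1}^n q_{n-k} S_k satisfies ‖t_n‖ ≤ c · sup_{1≤j≤n} ‖σ_j‖ for an absolute constant c (in fact c = 2 works), where σ_j = j^{-1} Σ_{k=1}^j S_k. -/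
open Finset

/-!
Writing `q m = q 0 + ∑_{i<m} (q (i+1) - q i)` and exchanging the sums (Abel summation) expresses
`∑ q (n-k) S k` through the partial sums `T j = j σ_j` with the coefficients `q 0` and
`q (i+1) - q i`, all nonnegative when `q` is monotone with `q 0 ≥ 0`. The same identity with
`S ≡ 1` gives `Q_n = q 0 n + ∑ (q (i+1) - q i) (n-1-i)`, so the triangle inequality yields
`‖t_n‖ ≤ sup_j ‖σ_j‖`, even with constant `1`.
-/

theorem sum_Icc_one_sub_eq_sum_range {M : Type*} [AddCommMonoid M] (f : ℕ → M) (n : ℕ) :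
    ∑ k ∈ Icc 1 n, f (n - k) = ∑ k ∈ range n, f k :=
  sum_nbij' (n - ·) (n - ·)
    (fun k hk => by simp only [mem_Icc, mem_range] at hk ⊢; omega)
    (fun k hk => by simp only [mem_Icc, mem_range] at hk ⊢; omega)
    (fun k hk => by simp only [mem_Icc] at hk; omega)
    (fun k hk => by simp only [mem_range] at hk; omega)
    (fun _ _ => rfl)

theorem sum_Icc_sub_smul_by_parts {R M : Type*} [Ring R] [AddCommGroup M]
    [Module R M] (q : ℕ → R) (S : ℕ → M) (n : ℕ) :
    ∑ k ∈ Icc 1 n, q (n - k) • S k =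
      q 0 • ∑ k ∈ Icc 1 n, S k + ∑ i ∈ range n, (q (i + 1) - q i) • ∑ k ∈ Icc 1 (n - 1 - i), S k := by
  have hq : ∀ m, q m = q 0 + ∑ i ∈ range m, (q (i + 1) - q i) := fun m => by
    rw [sum_range_sub, add_sub_cancel]
  calc ∑ k ∈ Icc 1 n, q (n - k) • S k
      = ∑ k ∈ Icc 1 n, (q 0 • S k + ∑ i ∈ range (n - k), (q (i + 1) - q i) • S k) :=
        sum_congr rfl fun k _ => by rw [hq (n - k), add_smul, sum_smul]
    _ = _ := by
        rw [sum_add_distrib, sum_comm' (t' := range n) (s' := fun i => Icc 1 (n - 1 - i))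
          (fun k i => by simp only [mem_Icc, mem_range]; omega), smul_sum]
        simp_rw [smul_sum]

theorem norm_sum_Icc_sub_smul_le {V : Type*} [NormedAddCommGroup V] [NormedSpace ℝ V] {q : ℕ → ℝ}
    (hq0 : 0 ≤ q 0) (hq : Monotone q) {S : ℕ → V} {n : ℕ} {M : ℝ}
    (hS : ∀ j ≤ n, ‖∑ k ∈ Icc 1 j, S k‖ ≤ j * M) :
    ‖∑ k ∈ Icc 1 n, q (n - k) • S k‖ ≤ (∑ k ∈ range n, q k) * M := by
  have hd : ∀ i, 0 ≤ q (i + 1) - q i := fun i => sub_nonneg.2 (hq i.le_succ)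
  have hQ : ∑ k ∈ range n, q k = q 0 * n + ∑ i ∈ range n, (q (i + 1) - q i) * (n - 1 - i : ℕ) := by
    simpa [sum_Icc_one_sub_eq_sum_range] using
      sum_Icc_sub_smul_by_parts q (fun _ => (1 : ℝ)) n
  rw [sum_Icc_sub_smul_by_parts, hQ, add_mul, sum_mul]
  refine norm_add_le_of_le ?_ ((norm_sum_le _ _).trans (sum_le_sum fun i _ => ?_))
  · rw [norm_smul_of_nonneg hq0, mul_assoc]
    exact mul_le_mul_of_nonneg_left (hS n le_rfl) hq0
  · rw [norm_smul_of_nonneg (hd i), mul_assoc]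
    exact mul_le_mul_of_nonneg_left (hS _ (by omega)) (hd i)

theorem norlund_bound_of_monotone_general (V : Type*) [NormedAddCommGroup V] [NormedSpace ℝ V]
    (q : ℕ → ℝ) (hnn : ∀ k, 0 ≤ q k) (hmono : Monotone q)
    (S : ℕ → V) (n : ℕ) (hn : 1 ≤ n) :
    ‖(∑ k ∈ Finset.range n, q k)⁻¹ • ∑ k ∈ Finset.Icc 1 n, q (n - k) • S k‖ ≤
      2 * (Finset.Icc 1 n).sup' (Finset.nonempty_Icc.mpr hn)
            (fun j => ‖(j : ℝ)⁻¹ • ∑ k ∈ Finset.Icc 1 j, S k‖) := by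
  set M := (Finset.Icc 1 n).sup' (Finset.nonempty_Icc.mpr hn)
    (fun j => ‖(j : ℝ)⁻¹ • ∑ k ∈ Finset.Icc 1 j, S k‖)
  set Q := ∑ k ∈ range n, q k
  have hM : 0 ≤ M := le_sup'_of_le _ (left_mem_Icc.2 hn) (norm_nonneg _)
  have hQ : 0 ≤ Q := sum_nonneg fun k _ => hnn k
  have hS : ∀ j ≤ n, ‖∑ k ∈ Icc 1 j, S k‖ ≤ j * M := by
    intro j hj
    rcases j.eq_zero_or_pos with rfl | hj0
    · simp
    have hσ := le_sup' (fun j : ℕ => ‖(j : ℝ)⁻¹ • ∑ k ∈ Icc 1 j, S k‖) (mem_Icc.2 ⟨hj0, hj⟩)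
    rwa [norm_smul, norm_inv, Real.norm_natCast, inv_mul_le_iff₀ (by positivity)] at hσ
  calc ‖Q⁻¹ • ∑ k ∈ Icc 1 n, q (n - k) • S k‖
      ≤ Q⁻¹ * (Q * M) := by
        rw [norm_smul_of_nonneg (inv_nonneg.2 hQ)]
        exact mul_le_mul_of_nonneg_left (norm_sum_Icc_sub_smul_le (hnn 0) hmono hS) (inv_nonneg.2 hQ)
    _ ≤ M := by rw [← mul_assoc]; exact mul_le_of_le_one_left hM (inv_mul_le_one_of_le₀ le_rfl hQ)
    _ ≤ 2 * M := by linarith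

/-- For a non-decreasing nonnegative sequence `q` with `q 0 > 0`, the Nörlund mean
satisfies `‖t_n‖ ≤ 2 · sup_{1≤j≤n} ‖σ_j‖`. -/
theorem norlund_bound_of_monotone (V : Type*) [NormedAddCommGroup V] [NormedSpace ℝ V]
    (q : ℕ → ℝ) (hnn : ∀ k, 0 ≤ q k) (hq0 : 0 < q 0) (hmono : Monotone q)
    (S : ℕ → V) (n : ℕ) (hn : 1 ≤ n) :
    ‖(∑ k ∈ Finset.range n, q k)⁻¹ • ∑ k ∈ Finset.Icc 1 n, q (n - k) • S k‖ ≤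
      2 * (Finset.Icc 1 n).sup' (Finset.nonempty_Icc.mpr hn)
            (fun j => ‖(j : ℝ)⁻¹ • ∑ k ∈ Finset.Icc 1 j, S k‖) :=
  norlund_bound_of_monotone_general V q hnn hmono S n hn
end
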